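/- arXiv:1610.01976 — 2 statements merged into one kernel-verified Lean document; each statement's English description precedes it below -/
import Mathlib

section
/- Let κ ≥ 0 and n ≥ 1. Suppose H : S → ℝ is a function on the unit sphere of an n-dimensional complex Hermitian vector space (V, ĝ) given by H(ξ) = R̂(ξ, ξ̄, ξ, ξ̄) for a curvature-type tensor R̂ (Hermitian bilinear in the first and second pairs, symmetric under exchange of the pairs), and assume H(ξ) ≤ −κ·|ξ|⁴_{ĝ} for all ξ ∈ V. Then for any Hermitian positive-definite form g on V, g^{i\bar j} g^{k\bar l} R̂_{i\bar j k\bar l} ≤ −κ·(n+1)/(2n)·(tr_g ĝ)². -/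
/-!
Royden's averaging argument. Choose `B` with `g⁻¹ = Bᴴ B`; in the frame given by the rows of `B`
the metric `g` becomes the identity, the contraction `g^{i j̄} g^{k l̄} R_{i j̄ k l̄}` becomes
`S = ∑ R_{a a c c}` and `tr_g ĝ` becomes `T = ∑ ĝ_{a a}`. Averaging the hypothesis over the `4ⁿ`
vectors `ξ = (ε_a)` with `ε_a ∈ {±1, ±i}` turns the quartic term into `2S - D`, where
`D = ∑ R_{a a a a}`, while `ĝ(ξ, ξ)` has mean `T`, so by Cauchy–Schwarz the mean of `ĝ(ξ, ξ)²`
is at least `T²`; hence `2S - D ≤ -κ T²`. Applying the hypothesis to the frame vectors themselves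
gives `n D ≤ -κ T²`, and adding `n` times the first inequality to the second yields
`2n S ≤ -κ (n + 1) T²`.
-/

open scoped ComplexOrder
open Finset Matrix ComplexConjugate

namespace Royden

section Forms

variable {ι : Type*} [Fintype ι]

/-- `R(ξ, ξ̄, ξ, ξ̄)`. -/
def quarticForm (R : ι → ι → ι → ι → ℂ) (ξ : ι → ℂ) : ℂ :=
  ∑ i, ∑ j, ∑ k, ∑ l, R i j k l * ξ i * conj (ξ j) * ξ k * conj (ξ l)

def hermitianForm (G : Matrix ι ι ℂ) (ξ : ι → ℂ) : ℂ :=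
  ∑ i, ∑ j, G i j * ξ i * conj (ξ j)

theorem hermitianForm_eq_dotProduct (G : Matrix ι ι ℂ) (ξ : ι → ℂ) :
    hermitianForm G ξ = ξ ⬝ᵥ (G *ᵥ star ξ) := by
  simp only [hermitianForm, dotProduct, mulVec, mul_sum, Pi.star_apply, RCLike.star_def]
  ac_rfl

theorem sum_comm₁₃ {M : Type*} [AddCommMonoid M] (f : ι → ι → ι → ι → M) :
    ∑ i, ∑ j, ∑ k, ∑ l, f i j k l = ∑ i, ∑ j, ∑ k, ∑ l, f k j i l :=
  calc _ = ∑ j, ∑ i, ∑ k, ∑ l, f i j k l := sum_comm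
    _ = ∑ j, ∑ k, ∑ i, ∑ l, f i j k l := sum_congr rfl fun _ _ => sum_comm
    _ = _ := sum_comm

variable [DecidableEq ι]

theorem quarticForm_single (R : ι → ι → ι → ι → ℂ) (a : ι) :
    quarticForm R (Pi.single a 1) = R a a a a := by
  simp [quarticForm, Pi.single_apply]

theorem hermitianForm_single (G : Matrix ι ι ℂ) (a : ι) :
    hermitianForm G (Pi.single a 1) = G a a := by
  simp [hermitianForm, Pi.single_apply]

end Forms

section Pullback

variable {ι κ : Type*} [Fintype ι]

/-- The components of `R` in the frame formed by the rows of `B`. -/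
def pullback (R : ι → ι → ι → ι → ℂ) (B : Matrix κ ι ℂ) : κ → κ → κ → κ → ℂ :=
  fun a b c d => ∑ i, ∑ j, ∑ k, ∑ l, R i j k l * B a i * conj (B b j) * B c k * conj (B d l)

theorem pullback_comm {R : ι → ι → ι → ι → ℂ} (hR : ∀ i j k l, R i j k l = R k j i l)
    (B : Matrix κ ι ℂ) (a b c d : κ) : pullback R B a b c d = pullback R B c b a d := by
  rw [pullback, sum_comm₁₃]
  refine sum_congr rfl fun i _ => sum_congr rfl fun j _ => sum_congr rfl fun k _ =>
    sum_congr rfl fun l _ => ?_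
  rw [hR]
  ring

variable [Fintype κ]

theorem sum_comm₄ {M : Type*} [AddCommMonoid M] (f : ι → ι → ι → ι → κ → M) :
    ∑ i, ∑ j, ∑ k, ∑ l, ∑ x, f i j k l x = ∑ x, ∑ i, ∑ j, ∑ k, ∑ l, f i j k l x := by
  simp only [Finset.sum_comm (γ := κ)]

theorem quarticForm_vecMul (R : ι → ι → ι → ι → ℂ) (B : Matrix κ ι ℂ) (η : κ → ℂ) :
    quarticForm R (η ᵥ* B) = quarticForm (pullback R B) η := by
  simp only [quarticForm, pullback, vecMul, dotProduct, map_sum, mul_assoc]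
  simp only [sum_mul_sum]
  simp only [mul_sum, sum_mul, sum_comm₄ (ι := ι) (κ := κ), map_mul]
  ac_rfl

theorem hermitianForm_vecMul (G : Matrix ι ι ℂ) (B : Matrix κ ι ℂ) (η : κ → ℂ) :
    hermitianForm G (η ᵥ* B) = hermitianForm (B * G * Bᴴ) η := by
  rw [hermitianForm_eq_dotProduct, hermitianForm_eq_dotProduct, star_vecMul, ← dotProduct_mulVec,
    mulVec_mulVec, mulVec_mulVec]

theorem sum_pullback_diag (R : ι → ι → ι → ι → ℂ) (B : Matrix κ ι ℂ) :
    ∑ a, ∑ c, pullback R B a a c c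
      = ∑ i, ∑ j, ∑ k, ∑ l, (Bᴴ * B) j i * (Bᴴ * B) l k * R i j k l := by
  simp only [pullback, mul_apply, conjTranspose_apply, RCLike.star_def, sum_mul, mul_sum,
    sum_comm₄ (ι := ι) (κ := κ)]
  rw [sum_comm]
  ac_rfl

theorem sum_conjTranspose_mul_self_mul (G : Matrix ι ι ℂ) (B : Matrix κ ι ℂ) :
    ∑ i, ∑ j, (Bᴴ * B) j i * G i j = (B * G * Bᴴ).trace := by
  rw [trace_mul_cycle, trace, sum_comm]
  rfl

end Pullback

section Phase

noncomputable def phase (t : Fin 4) : ℂ := Complex.I ^ (t : ℕ)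

theorem sum_phase_pow_mul_conj_pow {p q : ℕ} (hp : p ≤ 2) (hq : q ≤ 2) :
    ∑ t, phase t ^ p * conj (phase t) ^ q = if p = q then 4 else 0 := by
  simp only [phase, Fin.sum_univ_four]
  interval_cases p <;> interval_cases q <;> simp [pow_succ] <;> ring_nf

variable {ι : Type*} [Fintype ι] [DecidableEq ι]

theorem sum_prod_phase_pow (P Q : ι → ℕ) (hP : ∀ x, P x ≤ 2) (hQ : ∀ x, Q x ≤ 2) :
    ∑ f : ι → Fin 4, ∏ x, phase (f x) ^ P x * conj (phase (f x)) ^ Q x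
      = if P = Q then 4 ^ Fintype.card ι else 0 := by
  rw [← Fintype.prod_sum (f := fun x t => phase t ^ P x * conj (phase t) ^ Q x)]
  simp only [sum_phase_pow_mul_conj_pow (hP _) (hQ _), Finset.prod_ite_zero, prod_const,
    card_univ, funext_iff, mem_univ, true_implies]

omit [Fintype ι] in
theorem indicator_add_indicator_eq_iff (a b c d : ι) :
    ((fun x => (if a = x then 1 else 0) + (if c = x then 1 else 0) : ι → ℕ) =
      fun x => (if b = x then 1 else 0) + (if d = x then 1 else 0)) ↔
    (a = b ∧ c = d) ∨ (a = d ∧ c = b) := by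
  constructor
  · intro h
    have ha := congrFun h a
    have hb := congrFun h b
    have hc := congrFun h c
    grind
  · rintro (⟨rfl, rfl⟩ | ⟨rfl, rfl⟩)
    · rfl
    · exact funext fun x => add_comm _ _

theorem sum_phase_mul_conj (a b : ι) :
    ∑ f : ι → Fin 4, phase (f a) * conj (phase (f b))
      = if a = b then 4 ^ Fintype.card ι else 0 := by
  have h := sum_prod_phase_pow (fun x => if a = x then 1 else 0) (fun x => if b = x then 1 else 0)
    (fun x => by split_ifs <;> norm_num) (fun x => by split_ifs <;> norm_num)
  simp only [prod_mul_distrib, prod_pow_boole, mem_univ, if_true] at h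
  rw [h]
  congr 1
  exact propext ⟨fun h => by simpa [eq_comm] using congrFun h a, by rintro rfl; rfl⟩

theorem sum_phase_fourth_moment (a b c d : ι) :
    ∑ f : ι → Fin 4, phase (f a) * conj (phase (f b)) * phase (f c) * conj (phase (f d))
      = if (a = b ∧ c = d) ∨ (a = d ∧ c = b) then 4 ^ Fintype.card ι else 0 := by
  have h := sum_prod_phase_pow (fun x => (if a = x then 1 else 0) + (if c = x then 1 else 0))
    (fun x => (if b = x then 1 else 0) + (if d = x then 1 else 0))
    (fun x => by split_ifs <;> norm_num) (fun x => by split_ifs <;> norm_num)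
  simp only [pow_add, prod_mul_distrib, prod_pow_boole, mem_univ, if_true,
    indicator_add_indicator_eq_iff] at h
  rw [← h]
  exact sum_congr rfl fun f _ => by ring

theorem sum_hermitianForm_phase (G : Matrix ι ι ℂ) :
    ∑ f : ι → Fin 4, hermitianForm G (phase ∘ f) = 4 ^ Fintype.card ι * G.trace := by
  simp only [hermitianForm, Function.comp_apply, mul_assoc]
  simp only [Finset.sum_comm (γ := ι → Fin 4), ← mul_sum, sum_phase_mul_conj, mul_ite, mul_zero,
    sum_ite_eq, mem_univ, if_true, trace, diag_apply]
  rw [← sum_mul, mul_comm]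

theorem sum_quarticForm_phase (R : ι → ι → ι → ι → ℂ) :
    ∑ f : ι → Fin 4, quarticForm R (phase ∘ f) = 4 ^ Fintype.card ι *
      (∑ a, ∑ c, R a a c c + ∑ a, ∑ c, R a c c a - ∑ a, R a a a a) := by
  simp only [quarticForm, Function.comp_apply, mul_assoc]
  rw [← sum_comm₄ (ι := ι)]
  simp only [← mul_sum]
  have hsplit : ∀ a b c d : ι,
      (if (a = b ∧ c = d) ∨ (a = d ∧ c = b) then (4 : ℂ) ^ Fintype.card ι else 0) =
        (if a = b then if c = d then 4 ^ Fintype.card ι else 0 else 0) +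
        (if a = d then if c = b then 4 ^ Fintype.card ι else 0 else 0) -
        (if a = b then if c = d then if a = c then 4 ^ Fintype.card ι else 0 else 0 else 0) := by
    intro a b c d
    split_ifs <;> simp_all
  simp only [← mul_assoc, sum_phase_fourth_moment, hsplit, mul_add, mul_sub, sum_add_distrib,
    sum_sub_distrib, mul_ite, mul_zero, sum_ite_irrel, sum_const_zero, sum_ite_eq, sum_ite_eq',
    mem_univ, if_true, ← sum_mul]
  ring

end Phase

theorem card_mul_sum_le_neg_mul_sq_sum {α : Type*} (s : Finset α) {κ : ℝ} (hκ : 0 ≤ κ)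
    {F q : α → ℝ} (h : ∀ x ∈ s, F x ≤ -κ * q x ^ 2) :
    #s * ∑ x ∈ s, F x ≤ -κ * (∑ x ∈ s, q x) ^ 2 :=
  calc #s * ∑ x ∈ s, F x ≤ #s * ∑ x ∈ s, -κ * q x ^ 2 := by gcongr with x hx; exact h x hx
    _ = -κ * (#s * ∑ x ∈ s, q x ^ 2) := by rw [← mul_sum]; ring
    _ ≤ -κ * (∑ x ∈ s, q x) ^ 2 :=
      mul_le_mul_of_nonpos_left sq_sum_le_card_mul_sum_sq (neg_nonpos.mpr hκ)

theorem re_sum_le_of_quarticForm_le {ι : Type*} [Fintype ι] [DecidableEq ι] {κ : ℝ}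
    (hκ : 0 ≤ κ) {R : ι → ι → ι → ι → ℂ} {G : Matrix ι ι ℂ}
    (hR : ∀ a b c d, R a b c d = R c b a d)
    (hH : ∀ ξ, (quarticForm R ξ).re ≤ -κ * (hermitianForm G ξ).re ^ 2) :
    (∑ a, ∑ c, R a a c c).re
      ≤ -κ * ((Fintype.card ι + 1) / (2 * Fintype.card ι)) * G.trace.re ^ 2 := by
  rcases isEmpty_or_nonempty ι with hι | hι
  · simp
  have hdiag : Fintype.card ι * (∑ a, R a a a a).re ≤ -κ * G.trace.re ^ 2 := by
    have hframe := card_mul_sum_le_neg_mul_sq_sum univ hκ (F := fun a => (R a a a a).re)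
      (q := fun a => (G a a).re) fun a _ => by
        simpa only [quarticForm_single, hermitianForm_single] using hH (Pi.single a 1)
    simpa [trace, Complex.re_sum] using hframe
  have hmean : 2 * (∑ a, ∑ c, R a a c c).re - (∑ a, R a a a a).re ≤ -κ * G.trace.re ^ 2 := by
    have havg := card_mul_sum_le_neg_mul_sq_sum univ hκ fun f (_ : f ∈ univ) => hH (phase ∘ f)
    have hswap : ∑ a, ∑ c, R a c c a = ∑ a, ∑ c, R a a c c :=
      (sum_congr rfl fun a _ => sum_congr rfl fun c _ => hR a c c a).trans sum_comm
    have h4 : (4 : ℂ) ^ Fintype.card ι = ((4 ^ Fintype.card ι : ℝ) : ℂ) := by push_cast; rfl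
    simp only [← Complex.re_sum, sum_quarticForm_phase, sum_hermitianForm_phase, hswap, h4,
      Complex.re_ofReal_mul, card_univ, Fintype.card_fun, Fintype.card_fin, Complex.sub_re,
      Complex.add_re] at havg
    refine le_of_mul_le_mul_left ?_ (by positivity : (0 : ℝ) < (4 ^ Fintype.card ι) ^ 2)
    push_cast at havg
    linarith
  have hn : (0 : ℝ) < Fintype.card ι := by exact_mod_cast Fintype.card_pos
  rw [show -κ * ((Fintype.card ι + 1) / (2 * Fintype.card ι)) * G.trace.re ^ 2
      = (Fintype.card ι * (-κ * G.trace.re ^ 2) + -κ * G.trace.re ^ 2) / (2 * Fintype.card ι) by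
    field_simp; ring, le_div_iff₀ (by positivity)]
  linarith [mul_le_mul_of_nonneg_left hmean hn.le]

end Royden

open Royden in
theorem stmt6_general (n : ℕ) (κ : ℝ) (hκ : 0 ≤ κ)
    (gHat g : Matrix (Fin n) (Fin n) ℂ) (hg : g.PosDef)
    (R : Fin n → Fin n → Fin n → Fin n → ℂ)
    (hsym1 : ∀ i j k l, R i j k l = R k j i l)
    (hH : ∀ ξ : Fin n → ℂ,
      (∑ i, ∑ j, ∑ k, ∑ l,
        R i j k l * ξ i * starRingEnd ℂ (ξ j) * ξ k * starRingEnd ℂ (ξ l)).re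
        ≤ -κ * ((∑ i, ∑ j, gHat i j * ξ i * starRingEnd ℂ (ξ j)).re) ^ 2) :
    (∑ i, ∑ j, ∑ k, ∑ l, g⁻¹ j i * g⁻¹ l k * R i j k l).re
      ≤ -κ * ((n + 1) / (2 * n)) * ((∑ i, ∑ j, g⁻¹ j i * gHat i j).re) ^ 2 := by
  obtain ⟨B, hB⟩ : ∃ B : Matrix (Fin n) (Fin n) ℂ, g⁻¹ = star B * B := by
    open scoped MatrixOrder in
    exact CStarAlgebra.nonneg_iff_eq_star_mul_self.mp hg.inv.posSemidef.nonneg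
  rw [star_eq_conjTranspose] at hB
  have hH' : ∀ ξ, (quarticForm R ξ).re ≤ -κ * (hermitianForm gHat ξ).re ^ 2 := hH
  have h := re_sum_le_of_quarticForm_le hκ (pullback_comm hsym1 B) fun η => by
    simpa only [quarticForm_vecMul, hermitianForm_vecMul] using hH' (η ᵥ* B)
  rwa [sum_pullback_diag, ← sum_conjTranspose_mul_self_mul, ← hB, Fintype.card_fin] at h

theorem stmt6 (n : ℕ) (hn : 1 ≤ n) (κ : ℝ) (hκ : 0 ≤ κ)
    (gHat g : Matrix (Fin n) (Fin n) ℂ) (hgHat : gHat.PosDef) (hg : g.PosDef)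
    (R : Fin n → Fin n → Fin n → Fin n → ℂ)
    (hsym1 : ∀ i j k l, R i j k l = R k j i l)
    (hsym2 : ∀ i j k l, R i j k l = R i l k j)
    (hconj : ∀ i j k l, R i j k l = starRingEnd ℂ (R j i l k))
    (hH : ∀ ξ : Fin n → ℂ,
      (∑ i, ∑ j, ∑ k, ∑ l,
        R i j k l * ξ i * starRingEnd ℂ (ξ j) * ξ k * starRingEnd ℂ (ξ l)).re
        ≤ -κ * ((∑ i, ∑ j, gHat i j * ξ i * starRingEnd ℂ (ξ j)).re) ^ 2) :
    (∑ i, ∑ j, ∑ k, ∑ l, g⁻¹ j i * g⁻¹ l k * R i j k l).re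
      ≤ -κ * ((n + 1) / (2 * n)) * ((∑ i, ∑ j, g⁻¹ j i * gHat i j).re) ^ 2 :=
  stmt6_general n κ hκ gHat g hg R hsym1 hH
end

section
/- Let κ ≥ 0 and let R̂ be a Kähler curvature tensor on an n-dimensional Hermitian vector space (V, ĝ) with holomorphic sectional curvature ≤ −κ. For κ = 0 conclude: for any Hermitian positive-definite g, g^{i\bar j} g^{k\bar l} R̂_{i\bar j k\bar l} ≤ 0. -/
/-!
Write `g⁻¹ = Bᴴ B`. Then the contraction `g^{i\bar j} g^{k\bar l} R̂_{i\bar jk\bar l}` is the sum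
`∑_{a,b} R'_{a\bar ab\bar b}` of the components of `R' := R̂` expressed in the (possibly non-unitary)
frame given by the rows of `B`, and `R'` is again Kähler with `H ≤ 0`. So it suffices to treat
`∑_{a,b} R_{a\bar ab\bar b}` itself. Average `H` over the `4ⁿ` vectors `ξ = (ω^{ε_a})_a` with `ω = i`:
by orthogonality of characters of `(ℤ/4)ⁿ`, only the monomials `ξ_a ξ̄_b ξ_c ξ̄_d` with
`{a, c} = {b, d}` survive, so the average is `2 ∑_{a,b} R_{a\bar ab\bar b} - ∑_a R_{a\bar aa\bar a}`.
Both this average and each `R_{a\bar aa\bar a} = H(e_a)` are `≤ 0`.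
-/

open Finset Matrix ComplexConjugate
open scoped ComplexOrder

lemma Matrix.PosSemidef.exists_eq_conjTranspose_mul_self {ι 𝕜 : Type*} [RCLike 𝕜] [Fintype ι]
    [DecidableEq ι] {A : Matrix ι ι 𝕜} (hA : A.PosSemidef) : ∃ B : Matrix ι ι 𝕜, A = Bᴴ * B := by
  open scoped MatrixOrder in
  exact CStarAlgebra.nonneg_iff_eq_star_mul_self.mp hA.nonneg

theorem Finset.sum_comm_reverse₄ {κ M : Type*} [Fintype κ] [AddCommMonoid M]
    (f : κ → κ → κ → κ → M) :
    ∑ a, ∑ b, ∑ c, ∑ d, f a b c d = ∑ d, ∑ c, ∑ b, ∑ a, f a b c d :=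
  (Fintype.sum_congr _ _ fun _ => sum_comm_cycle).trans <| sum_comm.trans <|
    Fintype.sum_congr _ _ fun _ => sum_comm_cycle.trans <| Fintype.sum_congr _ _ fun _ => sum_comm

lemma ite_or_eq_add_sub {M : Type*} [AddCommGroup M] (p q : Prop) [Decidable p] [Decidable q]
    (x : M) :
    (if p ∨ q then x else 0)
      = (if p then x else 0) + (if q then x else 0) - if p ∧ q then x else 0 := by
  by_cases hp : p <;> by_cases hq : q <;> simp [hp, hq]

section Characters

variable {κ : Type*} [DecidableEq κ]

lemma eq_of_forall_sub_eq_zero {G : Type*} [AddGroup G] [Nontrivial G] {k l : κ}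
    (h : ∀ ε : κ → G, ε k - ε l = 0) : k = l := by
  by_contra hkl
  obtain ⟨x, hx⟩ := exists_ne (0 : G)
  exact hx (by simpa [Pi.single_apply, Ne.symm hkl] using h (Pi.single k x))

lemma forall_sub_add_sub_eq_zero_iff (i j k l : κ) :
    (∀ ε : κ → ZMod 4, ε i - ε j + ε k - ε l = 0) ↔ (i = j ∧ k = l) ∨ (i = l ∧ k = j) := by
  have : Fact (1 < 4) := ⟨by norm_num⟩
  refine ⟨fun h => ?_, ?_⟩
  · by_cases hij : i = j
    · subst hij
      exact .inl ⟨rfl, eq_of_forall_sub_eq_zero fun ε => by linear_combination h ε⟩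
    · -- with `ε = δᵢ` the relation reads `1 + [k = i] = 0`, impossible in `ZMod 4`
      have hil : i = l := by
        by_contra hil
        have := h (Pi.single i 1)
        simp only [Pi.single_apply, if_neg (Ne.symm hij), if_neg (Ne.symm hil)] at this
        split_ifs at this <;> revert this <;> decide
      subst hil
      exact .inr ⟨rfl, eq_of_forall_sub_eq_zero fun ε => by linear_combination h ε⟩
  · rintro (⟨rfl, rfl⟩ | ⟨rfl, rfl⟩) ε <;> ring

lemma sum_stdAddChar_sub_add_sub [Fintype κ] (i j k l : κ) :
    ∑ ε : κ → ZMod 4, ZMod.stdAddChar (ε i - ε j + ε k - ε l)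
      = if (i = j ∧ k = l) ∨ (i = l ∧ k = j) then 4 ^ Fintype.card κ else 0 := by
  classical
  let L : (κ → ZMod 4) →+ ZMod 4 := Pi.evalAddMonoidHom (fun _ => ZMod 4) i
    - Pi.evalAddMonoidHom (fun _ => ZMod 4) j + Pi.evalAddMonoidHom (fun _ => ZMod 4) k
    - Pi.evalAddMonoidHom (fun _ => ZMod 4) l
  have hψ : ZMod.stdAddChar.compAddMonoidHom L = 0 ↔ (i = j ∧ k = l) ∨ (i = l ∧ k = j) := by
    rw [← forall_sub_add_sub_eq_zero_iff, AddChar.eq_zero_iff]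
    refine forall_congr' fun ε => ?_
    rw [AddChar.compAddMonoidHom_apply, ← AddChar.map_zero_eq_one (ZMod.stdAddChar (N := 4)),
      ZMod.injective_stdAddChar.eq_iff]
    rfl
  have := AddChar.sum_eq_ite (ZMod.stdAddChar.compAddMonoidHom L)
  rw [if_congr hψ rfl rfl] at this
  simpa [L] using this

end Characters

namespace CurvatureTensor

variable {ι κ : Type*} [Fintype ι] [Fintype κ]

/-- `H(ξ) = R(ξ, ξ̄, ξ, ξ̄)`, without normalisation by `|ξ|⁴`. -/
def holSec (R : ι → ι → ι → ι → ℂ) (ξ : ι → ℂ) : ℂ :=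
  ∑ i, ∑ j, ∑ k, ∑ l, R i j k l * ξ i * conj (ξ j) * ξ k * conj (ξ l)

/-- The components of `R` in the frame formed by the rows of `B`. -/
def comap (B : Matrix κ ι ℂ) (R : ι → ι → ι → ι → ℂ) (a b e d : κ) : ℂ :=
  ∑ i, ∑ j, ∑ k, ∑ l, R i j k l * B a i * conj (B b j) * B e k * conj (B d l)

lemma holSec_comap (B : Matrix κ ι ℂ) (R : ι → ι → ι → ι → ℂ) (c : κ → ℂ) :
    holSec (comap B R) c = holSec R (c ᵥ* B) := by
  simp only [holSec, comap, vecMul, dotProduct, map_sum, map_mul, mul_sum, sum_mul]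
  -- terminates: it only moves `κ`-sums outward past `ι`-sums
  simp only [sum_comm (γ := ι) (α := κ) (s := univ) (t := univ)]
  rw [sum_comm_reverse₄]
  refine Fintype.sum_congr _ _ fun d => Fintype.sum_congr _ _ fun e =>
    Fintype.sum_congr _ _ fun b => Fintype.sum_congr _ _ fun a => ?_
  refine Fintype.sum_congr _ _ fun i => Fintype.sum_congr _ _ fun j =>
    Fintype.sum_congr _ _ fun k => Fintype.sum_congr _ _ fun l => ?_
  ring

omit [Fintype κ] in
lemma comap_swap {R : ι → ι → ι → ι → ℂ} (hR : ∀ i j k l, R i j k l = R i l k j)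
    (B : Matrix κ ι ℂ) (a b e d : κ) : comap B R a b e d = comap B R a d e b := by
  refine Fintype.sum_congr _ _ fun i => ?_
  rw [sum_comm, sum_congr rfl fun _ _ => sum_comm, sum_comm]
  refine Fintype.sum_congr _ _ fun j => Fintype.sum_congr _ _ fun k =>
    Fintype.sum_congr _ _ fun l => ?_
  rw [hR]
  ring

lemma sum_comap_diag (B : Matrix κ ι ℂ) (R : ι → ι → ι → ι → ℂ) :
    ∑ a, ∑ b, comap B R a a b b
      = ∑ i, ∑ j, ∑ k, ∑ l, (Bᴴ * B) j i * (Bᴴ * B) l k * R i j k l := by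
  simp only [comap, mul_apply, conjTranspose_apply, mul_sum, sum_mul]
  simp only [sum_comm (γ := ι) (α := κ) (s := univ) (t := univ)]
  rw [sum_comm]
  refine Fintype.sum_congr _ _ fun b => Fintype.sum_congr _ _ fun a => ?_
  refine Fintype.sum_congr _ _ fun i => Fintype.sum_congr _ _ fun j =>
    Fintype.sum_congr _ _ fun k => Fintype.sum_congr _ _ fun l => ?_
  simp only [RCLike.star_def]
  ring

variable [DecidableEq κ]

lemma holSec_single (R : κ → κ → κ → κ → ℂ) (a : κ) : holSec R (Pi.single a 1) = R a a a a := by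
  simp [holSec, Pi.single_apply]

lemma sum_holSec_stdAddChar (R : κ → κ → κ → κ → ℂ) :
    ∑ ε : κ → ZMod 4, holSec R (fun a => ZMod.stdAddChar (ε a))
      = 4 ^ Fintype.card κ *
          (∑ a, ∑ b, R a a b b + ∑ a, ∑ b, R a b b a - ∑ a, R a a a a) := by
  have hmono : ∀ (r : ℂ) (ε : κ → ZMod 4) (i j k l : κ),
      r * ZMod.stdAddChar (ε i) * conj (ZMod.stdAddChar (ε j)) * ZMod.stdAddChar (ε k)
        * conj (ZMod.stdAddChar (ε l)) = r * ZMod.stdAddChar (ε i - ε j + ε k - ε l) := by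
    intro r ε i j k l
    simp only [sub_eq_add_neg, AddChar.map_add_eq_mul, AddChar.map_neg_eq_conj, mul_assoc]
  simp only [holSec, hmono]
  simp only [sum_comm (γ := κ → ZMod 4) (α := κ) (s := univ) (t := univ), ← mul_sum,
    sum_stdAddChar_sub_add_sub]
  simp [ite_or_eq_add_sub, mul_sub, mul_add, sum_add_distrib, sum_sub_distrib, ite_and, mul_sum,
    mul_comm]

theorem re_sum_diag_nonpos {R : κ → κ → κ → κ → ℂ} (hR : ∀ i j k l, R i j k l = R i l k j)
    (hH : ∀ ξ, (holSec R ξ).re ≤ 0) : (∑ a, ∑ b, R a a b b).re ≤ 0 := by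
  have hdiag : (∑ a, R a a a a).re ≤ 0 := by
    rw [Complex.re_sum]
    exact sum_nonpos fun a _ => holSec_single R a ▸ hH _
  have havg : (∑ ε : κ → ZMod 4, holSec R (fun a => ZMod.stdAddChar (ε a))).re ≤ 0 := by
    rw [Complex.re_sum]
    exact sum_nonpos fun ε _ => hH _
  have h4 : (4 : ℂ) ^ Fintype.card κ = ((4 ^ Fintype.card κ : ℝ) : ℂ) := by push_cast; rfl
  rw [sum_holSec_stdAddChar, h4, Complex.re_ofReal_mul,
    Fintype.sum_congr _ _ fun a => Fintype.sum_congr _ _ fun b => hR a b b a] at havg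
  have := nonpos_of_mul_nonpos_right havg (by positivity)
  simp only [Complex.sub_re, Complex.add_re] at this
  linarith

end CurvatureTensor

theorem stmt7_general (n : ℕ)
    (g : Matrix (Fin n) (Fin n) ℂ) (hg : g.PosDef)
    (R : Fin n → Fin n → Fin n → Fin n → ℂ)
    (hsym2 : ∀ i j k l, R i j k l = R i l k j)
    (hH : ∀ ξ : Fin n → ℂ,
      (∑ i, ∑ j, ∑ k, ∑ l,
        R i j k l * ξ i * starRingEnd ℂ (ξ j) * ξ k * starRingEnd ℂ (ξ l)).re ≤ 0) :
    (∑ i, ∑ j, ∑ k, ∑ l, g⁻¹ j i * g⁻¹ l k * R i j k l).re ≤ 0 := by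
  obtain ⟨B, hB⟩ := hg.inv.posSemidef.exists_eq_conjTranspose_mul_self
  have := CurvatureTensor.re_sum_diag_nonpos (CurvatureTensor.comap_swap hsym2 B)
    fun c => CurvatureTensor.holSec_comap B R c ▸ hH (c ᵥ* B)
  rwa [CurvatureTensor.sum_comap_diag, ← hB] at this

theorem stmt7 (n : ℕ) (hn : 1 ≤ n)
    (gHat g : Matrix (Fin n) (Fin n) ℂ) (hgHat : gHat.PosDef) (hg : g.PosDef)
    (R : Fin n → Fin n → Fin n → Fin n → ℂ)
    (hsym1 : ∀ i j k l, R i j k l = R k j i l)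
    (hsym2 : ∀ i j k l, R i j k l = R i l k j)
    (hconj : ∀ i j k l, R i j k l = starRingEnd ℂ (R j i l k))
    (hH : ∀ ξ : Fin n → ℂ,
      (∑ i, ∑ j, ∑ k, ∑ l,
        R i j k l * ξ i * starRingEnd ℂ (ξ j) * ξ k * starRingEnd ℂ (ξ l)).re ≤ 0) :
    (∑ i, ∑ j, ∑ k, ∑ l, g⁻¹ j i * g⁻¹ l k * R i j k l).re ≤ 0 :=
  stmt7_general n g hg R hsym2 hH
end
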